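/- Every inconsistent logic has an algebraic semantics; an almost inconsistent logic has an algebraic semantics if and only if its language contains either two distinct constant symbols or a connective of arity at least one. -/

import Mathlib

/-- An algebraic signature: a type of operation symbols with arities. -/
structure Sig : Type 1 where
  Op : Type
  ar : Op → ℕ

/-- Formulas (terms) over a signature, with variables indexed by ℕ. -/
inductive Fm (L : Sig) : Type where
  | var : ℕ → Fm L
  | op : (f : L.Op) → (Fin (L.ar f) → Fm L) → Fm L

/-- An algebra for the signature `L`. -/
structure Alg (L : Sig) : Type 1 where
  carrier : Type
  interp : (f : L.Op) → (Fin (L.ar f) → carrier) → carrier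

/-- Evaluation of a formula in an algebra under a valuation of the variables. -/
def Fm.eval {L : Sig} (A : Alg L) (v : ℕ → A.carrier) : Fm L → A.carrier
  | .var n => v n
  | .op f as => A.interp f (fun i => (as i).eval A v)

/-- Substitution (endomorphism of the formula algebra). -/
def Fm.subst {L : Sig} (σ : ℕ → Fm L) : Fm L → Fm L
  | .var n => σ n
  | .op f as => .op f (fun i => (as i).subst σ)

/-- The set of variables occurring in a formula. -/
def Fm.vars {L : Sig} : Fm L → Set ℕ
  | .var n => {n}
  | .op _ as => ⋃ i, (as i).vars

/-- Substitute the formula `ψ` for the variable `v` in `φ`. -/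
def Fm.subst1 {L : Sig} (v : ℕ) (ψ : Fm L) (φ : Fm L) : Fm L :=
  φ.subst (fun n => if n = v then ψ else .var n)

/-- A logic: a substitution-invariant (finitary or not) consequence relation on formulas. -/
structure Logic (L : Sig) : Type where
  deriv : Set (Fm L) → Fm L → Prop
  axm : ∀ Γ φ, φ ∈ Γ → deriv Γ φ
  mono : ∀ Γ Δ φ, Γ ⊆ Δ → deriv Γ φ → deriv Δ φ
  cut : ∀ Γ Δ φ, deriv Γ φ → (∀ γ ∈ Γ, deriv Δ γ) → deriv Δ φ
  substInv : ∀ (σ : ℕ → Fm L) Γ φ, deriv Γ φ → deriv (Fm.subst σ '' Γ) (φ.subst σ)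

/-- A logical matrix: an algebra with a set of designated elements. -/
structure LMatrix (L : Sig) : Type 1 where
  alg : Alg L
  F : Set alg.carrier

/-- The consequence relation induced by a class of matrices. -/
def inducedBy {L : Sig} (M : Set (LMatrix L)) (Γ : Set (Fm L)) (φ : Fm L) : Prop :=
  ∀ m ∈ M, ∀ v : ℕ → m.alg.carrier,
    (∀ γ ∈ Γ, γ.eval m.alg v ∈ m.F) → φ.eval m.alg v ∈ m.F

/-- `M` is a matrix semantics for the logic `ℒ`. -/
def IsMatrixSemantics {L : Sig} (ℒ : Logic L) (M : Set (LMatrix L)) : Prop :=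
  ∀ Γ φ, ℒ.deriv Γ φ ↔ inducedBy M Γ φ

/-- Equational consequence relative to a class of algebras (equations as pairs of formulas). -/
def eqConseq {L : Sig} (K : Set (Alg L)) (Θ : Set (Fm L × Fm L)) (e : Fm L × Fm L) : Prop :=
  ∀ A ∈ K, ∀ v : ℕ → A.carrier,
    (∀ p ∈ Θ, p.1.eval A v = p.2.eval A v) → e.1.eval A v = e.2.eval A v

/-- `τ(φ)`: the result of substituting `φ` for the variable `x` (= variable 0) in each
equation of `τ`. -/
def tauApp {L : Sig} (τ : Set (Fm L × Fm L)) (φ : Fm L) : Set (Fm L × Fm L) :=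
  (fun e => (Fm.subst1 0 φ e.1, Fm.subst1 0 φ e.2)) '' τ

/-- `τ[Γ]`. -/
def tauAppSet {L : Sig} (τ : Set (Fm L × Fm L)) (Γ : Set (Fm L)) : Set (Fm L × Fm L) :=
  ⋃ γ ∈ Γ, tauApp τ γ

/-- `τ` is a set of equations in the single variable `x` (= variable 0). -/
def IsUnivalent {L : Sig} (τ : Set (Fm L × Fm L)) : Prop :=
  ∀ e ∈ τ, e.1.vars ⊆ ({0} : Set ℕ) ∧ e.2.vars ⊆ ({0} : Set ℕ)

/-- `K` is a `τ`-algebraic semantics for `ℒ`: `Γ ⊢ φ` iff `τ[Γ] ⊨_K τ(φ)`. -/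
def IsTauAlgSem {L : Sig} (ℒ : Logic L) (τ : Set (Fm L × Fm L)) (K : Set (Alg L)) : Prop :=
  IsUnivalent τ ∧ ∀ Γ φ, ℒ.deriv Γ φ ↔ ∀ e ∈ tauApp τ φ, eqConseq K (tauAppSet τ Γ) e

/-- `ℒ` has an algebraic semantics (admits an equational completeness theorem). -/
def HasAlgSem {L : Sig} (ℒ : Logic L) : Prop :=
  ∃ (τ : Set (Fm L × Fm L)) (K : Set (Alg L)), IsTauAlgSem ℒ τ K

/-- `θ` is a congruence of the algebra `A`. -/
def IsCong {L : Sig} (A : Alg L) (θ : A.carrier → A.carrier → Prop) : Prop :=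
  Equivalence θ ∧ ∀ (f : L.Op) (as bs : Fin (L.ar f) → A.carrier),
    (∀ i, θ (as i) (bs i)) → θ (A.interp f as) (A.interp f bs)

/-- The congruence of `A` generated by `X` (least congruence containing `X`). -/
def congGen {L : Sig} (A : Alg L) (X : Set (A.carrier × A.carrier))
    (a c : A.carrier) : Prop :=
  ∀ θ, IsCong A θ → (∀ p ∈ X, θ p.1 p.2) → θ a c

/-- `p` is a unary polynomial function of `A`: `p(a) = φ^A(a, c⃗)` for a formula `φ(x, y⃗)`
and parameters `c⃗` from `A`. -/
def IsUnaryPoly {L : Sig} (A : Alg L) (p : A.carrier → A.carrier) : Prop :=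
  ∃ (φ : Fm L) (c : ℕ → A.carrier),
    ∀ a, p a = φ.eval A (fun n => if n = 0 then a else c n)

/-- Compatibility of a relation with a set. -/
def Compatible {L : Sig} (A : Alg L) (θ : A.carrier → A.carrier → Prop)
    (F : Set A.carrier) : Prop :=
  ∀ a c, θ a c → a ∈ F → c ∈ F

/-- The Leibniz congruence `Ω^A F`: the largest congruence of `A` compatible with `F`
(realized as the union of all congruences compatible with `F`). -/
def leibniz {L : Sig} (A : Alg L) (F : Set A.carrier) (a c : A.carrier) : Prop :=
  ∃ θ, IsCong A θ ∧ Compatible A θ F ∧ θ a c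

/-- The formula algebra. -/
def FmAlg (L : Sig) : Alg L :=
  ⟨Fm L, fun f as => Fm.op f as⟩

/-- `ℒ` has no theorems. -/
def LacksTheorems {L : Sig} (ℒ : Logic L) : Prop :=
  ¬ ∃ φ, ℒ.deriv ∅ φ

/-- `ℒ` is assertional. -/
def Assertional {L : Sig} (ℒ : Logic L) : Prop :=
  ∃ (M : Set (LMatrix L)) (φ : Fm L), IsMatrixSemantics ℒ M ∧ φ.vars ⊆ ({0} : Set ℕ) ∧
    ∀ m ∈ M, ∃ c : m.alg.carrier,
      (∀ a : m.alg.carrier, φ.eval m.alg (fun _ => a) = c) ∧ m.F = {c}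

/-- `ℒ` is almost assertional. -/
def AlmostAssertional {L : Sig} (ℒ : Logic L) : Prop :=
  LacksTheorems ℒ ∧
  ∃ (M : Set (LMatrix L)) (φ : Fm L), IsMatrixSemantics ℒ M ∧ φ.vars ⊆ ({0} : Set ℕ) ∧
    ∀ m ∈ M, m.F.Nonempty → ∃ c : m.alg.carrier,
      (∀ a : m.alg.carrier, φ.eval m.alg (fun _ => a) = c) ∧ m.F = {c}

/-- Two formulas are logically equivalent in `ℒ`. -/
def LogEquiv {L : Sig} (ℒ : Logic L) (ε δ : Fm L) : Prop :=
  ∀ (φ : Fm L) (v : ℕ),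
    ℒ.deriv {Fm.subst1 v ε φ} (Fm.subst1 v δ φ) ∧
    ℒ.deriv {Fm.subst1 v δ φ} (Fm.subst1 v ε φ)

/-- `ℒ` is inconsistent. -/
def Inconsistent {L : Sig} (ℒ : Logic L) : Prop :=
  ∀ (Γ : Set (Fm L)) (φ : Fm L), ℒ.deriv Γ φ

/-- `ℒ` is almost inconsistent. -/
def AlmostInconsistent {L : Sig} (ℒ : Logic L) : Prop :=
  LacksTheorems ℒ ∧ ∀ (Γ : Set (Fm L)) (φ : Fm L), Γ.Nonempty → ℒ.deriv Γ φ

/-!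
For an almost inconsistent logic, a `τ`-semantics over `K` only has to separate `Γ = ∅` from
`Γ ≠ ∅`. The failure of `∅ ⊢ x` yields an algebra `A ∈ K` with an element at which `τ` fails, and
then `{y} ⊢ x` forces `τ` to fail at every element of `A`. Conversely such an algebra alone is an
algebraic semantics. Two distinct symbols `f, g` give `f(x,…,x) ≈ g(x,…,x)` in the algebra of
operation symbols, and a connective of positive arity gives `x ≈ f(x,…,x)` in `ℕ` with `f` acting
as the successor of its first argument. In any other signature the term operations are the
identity and at most one constant, and an element equal to that constant satisfies every equation.
-/

namespace Fm

variable {L : Sig} (A : Alg L)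

theorem eval_subst (σ : ℕ → Fm L) (v : ℕ → A.carrier) :
    ∀ φ : Fm L, (φ.subst σ).eval A v = φ.eval A (fun n => (σ n).eval A v)
  | .var _ => rfl
  | .op f as => by
    simp only [subst, eval]
    exact congrArg (A.interp f) (funext fun i => eval_subst σ v (as i))

theorem eval_congr {v w : ℕ → A.carrier} :
    ∀ φ : Fm L, (∀ n ∈ φ.vars, v n = w n) → φ.eval A v = φ.eval A w
  | .var n, h => h n rfl
  | .op f as, h => by
    simp only [eval]
    exact congrArg (A.interp f) (funext fun i =>
      eval_congr (as i) fun n hn => h n (Set.mem_iUnion.2 ⟨i, hn⟩))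

theorem eval_subst1_zero {ψ : Fm L} (hψ : ψ.vars ⊆ {0}) (φ : Fm L) (v : ℕ → A.carrier) :
    (subst1 0 φ ψ).eval A v = ψ.eval A (fun _ => φ.eval A v) := by
  rw [subst1, eval_subst]
  refine eval_congr A ψ fun n hn => ?_
  obtain rfl : n = 0 := hψ hn
  rfl

theorem eval_const_of_forall_interp_eq {a : A.carrier}
    (ha : ∀ f as, A.interp f as = a) : ∀ φ : Fm L, φ.eval A (fun _ => a) = a
  | .var _ => rfl
  | .op f _ => ha f _

def diag (f : L.Op) : Fm L :=
  .op f fun _ => .var 0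

theorem vars_diag_subset (f : L.Op) : (diag f).vars ⊆ {0} :=
  Set.iUnion_subset fun _ => subset_rfl

theorem eval_diag (f : L.Op) (v : ℕ → A.carrier) :
    (diag f).eval A v = A.interp f fun _ => v 0 :=
  rfl

end Fm

def SatisfiesAt {L : Sig} (A : Alg L) (τ : Set (Fm L × Fm L)) (a : A.carrier) : Prop :=
  ∀ e ∈ τ, e.1.eval A (fun _ => a) = e.2.eval A (fun _ => a)

def HasUnsatisfiableUnivalentEqs (L : Sig) : Prop :=
  ∃ τ : Set (Fm L × Fm L), IsUnivalent τ ∧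
    ∃ A : Alg L, Nonempty A.carrier ∧ ∀ a, ¬ SatisfiesAt A τ a

section AlgSem

variable {L : Sig} {τ : Set (Fm L × Fm L)}

theorem forall_tauApp_iff (hτ : IsUnivalent τ) (A : Alg L) (v : ℕ → A.carrier) (φ : Fm L) :
    (∀ e ∈ tauApp τ φ, e.1.eval A v = e.2.eval A v) ↔ SatisfiesAt A τ (φ.eval A v) := by
  simp only [tauApp, Set.forall_mem_image, SatisfiesAt]
  exact forall₂_congr fun e he => by
    rw [Fm.eval_subst1_zero A (hτ e he).1, Fm.eval_subst1_zero A (hτ e he).2]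

theorem forall_tauAppSet_iff (hτ : IsUnivalent τ) (A : Alg L) (v : ℕ → A.carrier)
    (Γ : Set (Fm L)) :
    (∀ p ∈ tauAppSet τ Γ, p.1.eval A v = p.2.eval A v) ↔
      ∀ γ ∈ Γ, SatisfiesAt A τ (γ.eval A v) := by
  refine ⟨fun h γ hγ => (forall_tauApp_iff hτ A v γ).1 fun e he => h e (Set.mem_biUnion hγ he),
    fun h p hp => ?_⟩
  obtain ⟨γ, hγ, hp⟩ := Set.mem_iUnion₂.1 hp
  exact (forall_tauApp_iff hτ A v γ).2 (h γ hγ) p hp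

theorem isTauAlgSem_iff (ℒ : Logic L) (K : Set (Alg L)) :
    IsTauAlgSem ℒ τ K ↔ IsUnivalent τ ∧ ∀ Γ φ, ℒ.deriv Γ φ ↔
      ∀ A ∈ K, ∀ v : ℕ → A.carrier,
        (∀ γ ∈ Γ, SatisfiesAt A τ (γ.eval A v)) → SatisfiesAt A τ (φ.eval A v) := by
  refine and_congr_right fun hτ => forall₂_congr fun Γ φ => iff_congr Iff.rfl ?_
  simp only [eqConseq, forall_tauAppSet_iff hτ, ← forall_tauApp_iff hτ]
  exact ⟨fun h A hA v hv e he => h e he A hA v hv, fun h e he A hA v hv => h A hA v hv e he⟩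

end AlgSem

theorem Inconsistent.hasAlgSem {L : Sig} {ℒ : Logic L} (h : Inconsistent ℒ) : HasAlgSem ℒ :=
  ⟨∅, ∅, fun _ he => he.elim, fun Γ φ => iff_of_true (h Γ φ) fun _ _ _ hA => hA.elim⟩

theorem AlmostInconsistent.hasAlgSem_iff {L : Sig} {ℒ : Logic L} (h : AlmostInconsistent ℒ) :
    HasAlgSem ℒ ↔ HasUnsatisfiableUnivalentEqs L := by
  constructor
  · rintro ⟨τ, K, hsem⟩
    obtain ⟨hτ, hderiv⟩ := (isTauAlgSem_iff ℒ K).1 hsem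
    have hfail : ¬ ℒ.deriv ∅ (.var 0) := fun hd => h.1 ⟨_, hd⟩
    simp only [hderiv, Set.mem_empty_iff_false, false_imp_iff, implies_true, true_imp_iff,
      not_forall] at hfail
    obtain ⟨A, hA, v, hv⟩ := hfail
    refine ⟨τ, hτ, A, ⟨v 0⟩, fun a ha => hv ?_⟩
    have hyx := (hderiv {.var 1} (.var 0)).1 (h.2 _ _ (Set.singleton_nonempty _)) A hA
      (fun n => if n = 1 then a else v 0)
    simpa [Fm.eval] using hyx (by simpa [Fm.eval] using ha)
  · rintro ⟨τ, hτ, A, ⟨a⟩, hA⟩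
    refine ⟨τ, {A}, (isTauAlgSem_iff ℒ {A}).2 ⟨hτ, fun Γ φ => ?_⟩⟩
    simp only [Set.mem_singleton_iff, forall_eq]
    rcases Γ.eq_empty_or_nonempty with rfl | ⟨γ, hγ⟩
    · refine iff_of_false (fun hd => h.1 ⟨φ, hd⟩) fun hφ => ?_
      exact hA _ (hφ (fun _ => a) fun _ hγ => hγ.elim)
    · exact iff_of_true (h.2 Γ φ ⟨γ, hγ⟩) fun v hv => (hA _ (hv γ hγ)).elim

theorem hasUnsatisfiableUnivalentEqs_of_ne {L : Sig} {f g : L.Op} (hfg : f ≠ g) :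
    HasUnsatisfiableUnivalentEqs L := by
  refine ⟨{(.diag f, .diag g)}, ?_, ⟨L.Op, fun h _ => h⟩, ⟨f⟩, fun _ ha => hfg ?_⟩
  · rintro _ rfl
    exact ⟨Fm.vars_diag_subset f, Fm.vars_diag_subset g⟩
  · simpa [SatisfiesAt, Fm.eval_diag] using ha

theorem hasUnsatisfiableUnivalentEqs_of_pos_ar {L : Sig} {f : L.Op} (hf : 0 < L.ar f) :
    HasUnsatisfiableUnivalentEqs L := by
  let A : Alg L := ⟨ℕ, fun h as => if hh : 0 < L.ar h then as ⟨0, hh⟩ + 1 else 0⟩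
  refine ⟨{(.var 0, .diag f)}, ?_, A, ⟨0⟩, fun n hn => ?_⟩
  · rintro _ rfl
    exact ⟨subset_rfl, Fm.vars_diag_subset f⟩
  · simp [SatisfiesAt, Fm.eval_diag, Fm.eval, A, hf] at hn

theorem exists_forall_interp_eq {L : Sig} (h0 : ∀ f, L.ar f = 0) (hone : ∀ f g : L.Op, f = g)
    (A : Alg L) [Nonempty A.carrier] : ∃ a : A.carrier, ∀ f as, A.interp f as = a := by
  by_cases hL : Nonempty L.Op
  · obtain ⟨c⟩ := hL
    refine ⟨A.interp c fun _ => Classical.arbitrary _, fun f as => ?_⟩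
    obtain rfl := hone f c
    have : IsEmpty (Fin (L.ar f)) := by rw [h0 f]; infer_instance
    exact congrArg (A.interp f) (Subsingleton.elim _ _)
  · exact ⟨Classical.arbitrary _, fun f => (hL ⟨f⟩).elim⟩

theorem not_hasUnsatisfiableUnivalentEqs {L : Sig} (h0 : ∀ f, L.ar f = 0)
    (hone : ∀ f g : L.Op, f = g) : ¬ HasUnsatisfiableUnivalentEqs L := by
  rintro ⟨τ, -, A, hA, hτA⟩
  obtain ⟨a, ha⟩ := exists_forall_interp_eq h0 hone A
  refine hτA a fun e _ => ?_
  rw [Fm.eval_const_of_forall_interp_eq A ha, Fm.eval_const_of_forall_interp_eq A ha]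

/-- Every inconsistent logic has an algebraic semantics; an almost inconsistent logic has
one iff its language contains two distinct constants or a connective of arity ≥ 1. -/
theorem trivial_logics_alg_sem {L : Sig} (ℒ : Logic L) :
    (Inconsistent ℒ → HasAlgSem ℒ) ∧
    (AlmostInconsistent ℒ →
      (HasAlgSem ℒ ↔
        ((∃ f g : L.Op, f ≠ g ∧ L.ar f = 0 ∧ L.ar g = 0) ∨
          ∃ f : L.Op, 1 ≤ L.ar f))) := by
  refine ⟨Inconsistent.hasAlgSem, fun hAI => hAI.hasAlgSem_iff.trans ⟨?_, ?_⟩⟩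
  · contrapose!
    rintro ⟨hconst, hpos⟩
    have h0 : ∀ f, L.ar f = 0 := fun f => Nat.lt_one_iff.1 (hpos f)
    exact not_hasUnsatisfiableUnivalentEqs h0 fun f g =>
      by_contra fun hfg => hconst f g hfg (h0 f) (h0 g)
  · rintro (⟨f, g, hfg, -⟩ | ⟨f, hf⟩)
    · exact hasUnsatisfiableUnivalentEqs_of_ne hfg
    · exact hasUnsatisfiableUnivalentEqs_of_pos_ar hf
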